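/- arXiv:2003.00592 — 6 statements merged into one kernel-verified Lean document; each statement's English description precedes it below -/
import Mathlib

section
/- Let C be a small category with a coverage τ. Assigning to every object X of Ĉ the singleton families {π : Y → X}, where π ranges over the τ-local epimorphisms with target X, defines a coverage τ̂ on Ĉ: every identity family {1_X} is a covering, and for every τ-local epimorphism π : Y → X and every morphism g : Z → X there exists a τ-local epimorphism π' : W → Z such that g ∘ π' factors through π. -/
universe u

open CategoryTheory CategoryTheory.Limits Opposite

/-- A family of morphisms `{fᵢ : cᵢ ⟶ c}` indexed by a (small) set. -/
structure CoverFamily (C : Type u) [CategoryTheory.SmallCategory C] (c : C) : Type (u + 1) where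
  ι : Type u
  obj : ι → C
  map : ∀ i : ι, obj i ⟶ c

/-- A coverage (Grothendieck pretopology) in the sense of the paper:
identity families are coverings, and coverings admit weak pullbacks. -/
structure PaperCoverage (C : Type u) [CategoryTheory.SmallCategory C] : Type (u + 1) where
  covers : ∀ c : C, Set (CoverFamily C c)
  id_mem : ∀ c : C, (⟨PUnit, fun _ => c, fun _ => 𝟙 c⟩ : CoverFamily C c) ∈ covers c
  pullback_compat : ∀ {c c' : C} (g : c' ⟶ c) (fam : CoverFamily C c), fam ∈ covers c →
    ∃ fam' ∈ covers c', ∀ j : fam'.ι, ∃ (i : fam.ι) (h : fam'.obj j ⟶ fam.obj i),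
      h ≫ fam.map i = fam'.map j ≫ g

variable {C : Type u} [SmallCategory C]

/-- A morphism `π : Y ⟶ X` of presheaves is a `τ`-local epimorphism if every
morphism `y(c) ⟶ X` admits local lifts through `π` along some covering family of `c`. -/
def IsLocalEpi (τ : PaperCoverage C) {Y X : Cᵒᵖ ⥤ Type u} (π : Y ⟶ X) : Prop :=
  ∀ (c : C) (φ : yoneda.obj c ⟶ X),
    ∃ fam ∈ τ.covers c, ∀ j : fam.ι,
      ∃ φj : yoneda.obj (fam.obj j) ⟶ Y, φj ≫ π = yoneda.map (fam.map j) ≫ φ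

theorem isLocalEpi_id (τ : PaperCoverage C) (X : Cᵒᵖ ⥤ Type u) : IsLocalEpi τ (𝟙 X) :=
  fun c φ => ⟨_, τ.id_mem c, fun _ => ⟨φ, by simp⟩⟩

theorem IsLocalEpi.of_isPullback {τ : PaperCoverage C} {P X Y Z : Cᵒᵖ ⥤ Type u}
    {fst : P ⟶ Y} {snd : P ⟶ Z} {π : Y ⟶ X} {g : Z ⟶ X} (hπ : IsLocalEpi τ π)
    (hP : IsPullback fst snd π g) : IsLocalEpi τ snd := by
  intro c φ
  obtain ⟨fam, hfam, hlift⟩ := hπ c (φ ≫ g)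
  refine ⟨fam, hfam, fun j => ?_⟩
  obtain ⟨φj, hφj⟩ := hlift j
  exact ⟨hP.lift φj (yoneda.map (fam.map j) ≫ φ) (by rw [hφj, Category.assoc]),
    hP.lift_snd _ _ _⟩

/-- The τ-local epimorphisms form a coverage `τ̂` on `Ĉ`:
every identity is a τ-local epimorphism (so the identity singleton families are coverings),
and for every τ-local epimorphism `π : Y ⟶ X` and every morphism `g : Z ⟶ X` there is a
τ-local epimorphism `π' : W ⟶ Z` such that `g ∘ π'` factors through `π`. -/
theorem localEpis_form_coverage (τ : PaperCoverage C) :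
    (∀ X : Cᵒᵖ ⥤ Type u, IsLocalEpi τ (𝟙 X)) ∧
    (∀ (X Y Z : Cᵒᵖ ⥤ Type u) (π : Y ⟶ X) (g : Z ⟶ X), IsLocalEpi τ π →
      ∃ (W : Cᵒᵖ ⥤ Type u) (π' : W ⟶ Z), IsLocalEpi τ π' ∧
        ∃ h : W ⟶ Y, h ≫ π = π' ≫ g) :=
  ⟨isLocalEpi_id τ, fun _ _ _ π g hπ =>
    ⟨pullback π g, pullback.snd π g, hπ.of_isPullback (IsPullback.of_hasPullback π g),
      pullback.fst π g, pullback.condition⟩⟩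
end

section
/- Let C be a small category with a coverage τ. The site (C,τ) is closed if and only if the class of τ-local epimorphisms in Ĉ is stable under composition (i.e., for all τ-local epimorphisms g : Z → Y and f : Y → X, the composite f ∘ g is a τ-local epimorphism). -/
universe u

open CategoryTheory CategoryTheory.Limits Opposite

variable {C : Type u} [SmallCategory C]

/-- The site `(C,τ)` is closed: refinements of coverings by coverings are refined
by a single covering whose members factor through the composites. -/
def PaperCoverage.IsClosed (τ : PaperCoverage C) : Prop :=
  ∀ (c : C) (fam : CoverFamily C c), fam ∈ τ.covers c →
    ∀ (sub : ∀ i : fam.ι, CoverFamily C (fam.obj i)),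
      (∀ i : fam.ι, sub i ∈ τ.covers (fam.obj i)) →
      ∃ fam' ∈ τ.covers c, ∀ k : fam'.ι,
        ∃ (i : fam.ι) (j : (sub i).ι) (h : fam'.obj k ⟶ (sub i).obj j),
          h ≫ ((sub i).map j ≫ fam.map i) = fam'.map k

/-!
A family `{cᵢ → c}` determines the presheaf `∐ᵢ y(cᵢ)` (sections over `d` are pairs of an index `i`
and a map `d → cᵢ`) with its map to `y(c)`. This map is a local epimorphism when the family covers,
and if it is one, lifting `𝟙 c` along it yields a covering refining the family. For coverings
`{cᵢⱼ → cᵢ}` of the `cᵢ`, the map `∐ y(cᵢⱼ) → y(c)` is the composite `∐ y(cᵢⱼ) → ∐ y(cᵢ) → y(c)`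
of two local epimorphisms, so stability under composition gives the covering closedness asks
for. Conversely, closedness merges the coverings produced by two successive lifting problems into
one.
-/

section

variable {τ : PaperCoverage C}

theorem isLocalEpi_iff {Y X : Cᵒᵖ ⥤ Type u} (π : Y ⟶ X) :
    IsLocalEpi τ π ↔ ∀ (c : C) (x : X.obj (op c)), ∃ fam ∈ τ.covers c, ∀ j : fam.ι,
      ∃ y : Y.obj (op (fam.obj j)), π.app _ y = X.map (fam.map j).op x := by
  refine forall_congr' fun c => yonedaEquiv.forall_congr fun φ => ?_
  refine exists_congr fun fam => and_congr_right fun _ => forall_congr' fun j => ?_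
  refine yonedaEquiv.exists_congr fun ψ => ?_
  rw [← yonedaEquiv_comp, yonedaEquiv_naturality, yonedaEquiv.apply_eq_iff_eq]

theorem PaperCoverage.IsClosed.isLocalEpi_comp (hcl : τ.IsClosed) {X Y Z : Cᵒᵖ ⥤ Type u}
    {g : Z ⟶ Y} {f : Y ⟶ X} (hg : IsLocalEpi τ g) (hf : IsLocalEpi τ f) :
    IsLocalEpi τ (g ≫ f) := by
  rw [isLocalEpi_iff] at *
  intro c x
  obtain ⟨fam, hfam, hy⟩ := hf c x
  choose y hy using hy
  choose sub hsub z hz using fun i => hg _ (y i)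
  obtain ⟨fam', hfam', hrefine⟩ := hcl c fam hfam sub hsub
  refine ⟨fam', hfam', fun k => ?_⟩
  obtain ⟨i, j, h, hh⟩ := hrefine k
  refine ⟨Z.map h.op (z i j), ?_⟩
  simp [NatTrans.naturality_apply, hz, hy, ← hh]

namespace CoverFamily

variable {c : C} (fam : CoverFamily C c)

def presheaf : Cᵒᵖ ⥤ Type u where
  obj d := Σ i : fam.ι, (unop d ⟶ fam.obj i)
  map f := TypeCat.ofHom fun x => ⟨x.1, f.unop ≫ x.2⟩
  map_id d := by ext x <;> simp
  map_comp f g := by ext x <;> simp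

def toYoneda : fam.presheaf ⟶ yoneda.obj c where
  app d := TypeCat.ofHom fun x => x.2 ≫ fam.map x.1
  naturality d d' f := by ext x; exact Category.assoc _ _ _

theorem isLocalEpi_toYoneda (hfam : fam ∈ τ.covers c) : IsLocalEpi τ fam.toYoneda := by
  rw [isLocalEpi_iff]
  intro c' x
  obtain ⟨fam', hfam', hfactor⟩ := τ.pullback_compat x fam hfam
  refine ⟨fam', hfam', fun j => ?_⟩
  obtain ⟨i, h, hh⟩ := hfactor j
  exact ⟨⟨i, h⟩, hh⟩

def bind (sub : ∀ i, CoverFamily C (fam.obj i)) : CoverFamily C c where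
  ι := Σ i, (sub i).ι
  obj p := (sub p.1).obj p.2
  map p := (sub p.1).map p.2 ≫ fam.map p.1

variable {fam}

def bindToPresheaf (sub : ∀ i, CoverFamily C (fam.obj i)) :
    (fam.bind sub).presheaf ⟶ fam.presheaf where
  app d := TypeCat.ofHom fun x => ⟨x.1.1, x.2 ≫ (sub x.1.1).map x.1.2⟩
  naturality d d' f := by ext x; exact congrArg (Sigma.mk _) (Category.assoc _ _ _)

theorem bindToPresheaf_comp_toYoneda (sub : ∀ i, CoverFamily C (fam.obj i)) :
    bindToPresheaf sub ≫ fam.toYoneda = (fam.bind sub).toYoneda := by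
  ext d x
  exact Category.assoc _ _ _

theorem isLocalEpi_bindToPresheaf {sub : ∀ i, CoverFamily C (fam.obj i)}
    (hsub : ∀ i, sub i ∈ τ.covers (fam.obj i)) : IsLocalEpi τ (bindToPresheaf sub) := by
  rw [isLocalEpi_iff]
  rintro c' ⟨i, x⟩
  obtain ⟨fam', hfam', hfactor⟩ := τ.pullback_compat x (sub i) (hsub i)
  refine ⟨fam', hfam', fun j => ?_⟩
  obtain ⟨i', h, hh⟩ := hfactor j
  exact ⟨⟨⟨i, i'⟩, h⟩, congrArg (Sigma.mk i) hh⟩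

theorem exists_refinement_of_isLocalEpi_toYoneda (h : IsLocalEpi τ fam.toYoneda) :
    ∃ fam' ∈ τ.covers c, ∀ k : fam'.ι,
      ∃ (i : fam.ι) (f : fam'.obj k ⟶ fam.obj i), f ≫ fam.map i = fam'.map k := by
  obtain ⟨fam', hfam', hlift⟩ := (isLocalEpi_iff _).1 h c (𝟙 c)
  refine ⟨fam', hfam', fun k => ?_⟩
  obtain ⟨⟨i, f⟩, hf⟩ := hlift k
  exact ⟨i, f, hf.trans (Category.comp_id _)⟩

end CoverFamily

end

/-- The site `(C,τ)` is closed if and only if the τ-local epimorphisms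
in `Ĉ` are stable under composition. -/
theorem isClosed_iff_localEpi_comp_stable (τ : PaperCoverage C) :
    τ.IsClosed ↔
      ∀ {X Y Z : Cᵒᵖ ⥤ Type u} (g : Z ⟶ Y) (f : Y ⟶ X),
        IsLocalEpi τ g → IsLocalEpi τ f → IsLocalEpi τ (g ≫ f) := by
  refine ⟨fun hcl _ _ _ _ _ hg hf => hcl.isLocalEpi_comp hg hf,
    fun hcomp c fam hfam sub hsub => ?_⟩
  have hbind :=
    hcomp _ _ (CoverFamily.isLocalEpi_bindToPresheaf hsub) (fam.isLocalEpi_toYoneda hfam)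
  rw [CoverFamily.bindToPresheaf_comp_toYoneda] at hbind
  obtain ⟨fam', hfam', hrefine⟩ := CoverFamily.exists_refinement_of_isLocalEpi_toYoneda hbind
  refine ⟨fam', hfam', fun k => ?_⟩
  obtain ⟨⟨i, j⟩, h, hh⟩ := hrefine k
  exact ⟨i, j, h, hh⟩
end

section
/- Let C be a small category with a coverage τ. The class of τ-local epimorphisms in Ĉ is stable under composition if and only if the site (Ĉ, τ̂) is closed; explicitly, the latter condition says: for all τ-local epimorphisms g : Z → Y and f : Y → X there exist a τ-local epimorphism h : W → X and a morphism q : W → Z with h = f ∘ g ∘ q. -/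
universe u

open CategoryTheory CategoryTheory.Limits Opposite

variable {C : Type u} [SmallCategory C]

theorem IsLocalEpi.of_comp (τ : PaperCoverage C) {W Z X : Cᵒᵖ ⥤ Type u} {q : W ⟶ Z}
    {k : Z ⟶ X} (hqk : IsLocalEpi τ (q ≫ k)) : IsLocalEpi τ k := by
  intro c φ
  obtain ⟨fam, hfam, lift⟩ := hqk c φ
  refine ⟨fam, hfam, fun j => ?_⟩
  obtain ⟨φj, hφj⟩ := lift j
  exact ⟨φj ≫ q, by rwa [Category.assoc]⟩

/-- The τ-local epimorphisms in `Ĉ` are stable under composition if and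
only if the site `(Ĉ, τ̂)` is closed, i.e. for all τ-local epimorphisms `g : Z ⟶ Y` and
`f : Y ⟶ X` there exist a τ-local epimorphism `h : W ⟶ X` and a morphism `q : W ⟶ Z`
with `h = f ∘ g ∘ q`. -/
theorem localEpi_comp_stable_iff_hat_closed (τ : PaperCoverage C) :
    (∀ {X Y Z : Cᵒᵖ ⥤ Type u} (g : Z ⟶ Y) (f : Y ⟶ X),
        IsLocalEpi τ g → IsLocalEpi τ f → IsLocalEpi τ (g ≫ f)) ↔
      (∀ {X Y Z : Cᵒᵖ ⥤ Type u} (g : Z ⟶ Y) (f : Y ⟶ X),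
        IsLocalEpi τ g → IsLocalEpi τ f →
          ∃ (W : Cᵒᵖ ⥤ Type u) (h : W ⟶ X) (q : W ⟶ Z),
            IsLocalEpi τ h ∧ h = q ≫ g ≫ f) := by
  constructor
  · intro comp_stable X Y Z g f hg hf
    exact ⟨Z, g ≫ f, 𝟙 Z, comp_stable g f hg hf, (Category.id_comp _).symm⟩
  · intro closed X Y Z g f hg hf
    obtain ⟨W, _, q, hh, rfl⟩ := closed g f hg hf
    exact IsLocalEpi.of_comp τ hh
end

section
/- Let C be a small category with a coverage τ, and let F : C^op → Set be a τ-sheaf. Then the presheaf Hom_Ĉ(−, F) : Ĉ^op → Set satisfies descent along every τ-local epimorphism: for every τ-local epimorphism p : Y → X in Ĉ, the diagram Hom_Ĉ(X, F) → Hom_Ĉ(Y, F) ⇉ Hom_Ĉ(Y ×_X Y, F), with first map given by precomposition with p and the pair of maps given by precomposition with the two projections of the kernel pair of p, is an equalizer of sets. In particular, Hom_Ĉ(−, F) is a sheaf for the Grothendieck topology on Ĉ generated by the coverage τ̂ of τ-local epimorphisms. -/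
universe u

open CategoryTheory CategoryTheory.Limits Opposite

variable {C : Type u} [SmallCategory C]

/-- The Mathlib coverage on `C` associated to a paper-style coverage `τ`:
its covering presieves are the presieves generated by the covering families of `τ`. -/
def PaperCoverage.toCoverage (τ : PaperCoverage C) : Coverage C where
  coverings c := { S | ∃ fam ∈ τ.covers c, S = Presieve.ofArrows fam.obj fam.map }
  pullback := by
    rintro c c' g S ⟨fam, hfam, rfl⟩
    obtain ⟨fam', hfam', H⟩ := τ.pullback_compat g fam hfam
    refine ⟨Presieve.ofArrows fam'.obj fam'.map, ⟨fam', hfam', rfl⟩, ?_⟩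
    rintro Z h ⟨j⟩
    obtain ⟨i, k, hk⟩ := H j
    exact ⟨fam.obj i, k, fam.map i, Presieve.ofArrows.mk i, hk⟩

/-- The Grothendieck topology on `C` generated by the coverage `τ`. -/
def PaperCoverage.topology (τ : PaperCoverage C) : GrothendieckTopology C :=
  τ.toCoverage.toGrothendieck

/-- The coverage `τ̂` on `Ĉ` whose covering families are the singleton families
`{π : Y ⟶ X}` with `π` a τ-local epimorphism. -/
def hatCoverage (τ : PaperCoverage C) : Coverage (Cᵒᵖ ⥤ Type u) where
  coverings X := { S | ∃ (Y : Cᵒᵖ ⥤ Type u) (π : Y ⟶ X),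
    IsLocalEpi τ π ∧ S = Presieve.singleton π }
  pullback := by
    rintro X Z g S ⟨Y, π, hπ, rfl⟩
    have hfst : IsLocalEpi τ (pullback.fst g π) := by
      intro c φ
      obtain ⟨fam, hfam, H⟩ := hπ c (φ ≫ g)
      refine ⟨fam, hfam, fun j => ?_⟩
      obtain ⟨φj, hφj⟩ := H j
      refine ⟨pullback.lift (yoneda.map (fam.map j) ≫ φ) φj ?_, ?_⟩
      · rw [Category.assoc, ← hφj]
      · exact pullback.lift_fst _ _ _
    refine ⟨Presieve.singleton (pullback.fst g π),
      ⟨pullback g π, pullback.fst g π, hfst, rfl⟩, ?_⟩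
    rintro W h ⟨⟩
    exact ⟨_, pullback.snd g π, π, Presieve.singleton.mk, pullback.condition.symm⟩

/-- The Grothendieck topology on `Ĉ` generated by the coverage `τ̂` of
τ-local epimorphisms. -/
def hatTopology (τ : PaperCoverage C) : GrothendieckTopology (Cᵒᵖ ⥤ Type u) :=
  (hatCoverage τ).toGrothendieck

/-- A presheaf of sets `G` on `Ĉ` is limit-preserving if it sends colimits in `Ĉ` to
limits in `Set`: for every small diagram `D`, the cone obtained by applying `G` to the
colimit cocone of `D` is a limit cone (i.e. the canonical map
`G(colim D) ⟶ lim G(D(j))` is a bijection). -/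
def LimitPreserving (G : (Cᵒᵖ ⥤ Type u)ᵒᵖ ⥤ Type u) : Prop :=
  ∀ (J : Type u) (_ : SmallCategory J) (D : J ⥤ Cᵒᵖ ⥤ Type u),
    Nonempty (IsLimit (G.mapCone (colimit.cocone D).op))

/-!
A `τ`-local epimorphism `p : Y ⟶ X` is locally surjective for the topology generated by `τ`.
The kernel-pair condition on `t : Y ⟶ F` says that `t` is constant on the fibres of `p`. So for a
section `x` of `X`, the values of `t` on local preimages of `x` form a compatible family on the
image sieve of `x`, and `s(x)` is its amalgamation; naturality of `s` and uniqueness follow from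
`F` being separated. The sheaf condition for `τ̂` is the same statement for singleton covers.
-/

namespace CategoryTheory.Presheaf

universe v w

variable {D : Type*} [Category.{v} D] {J : GrothendieckTopology D} {F Y X : Dᵒᵖ ⥤ Type w}

lemma app_eq_app_of_pullback_fst_comp_eq {p : Y ⟶ X} {t : Y ⟶ F}
    (ht : pullback.fst p p ≫ t = pullback.snd p p ≫ t) {U : Dᵒᵖ} {y y' : Y.obj U}
    (h : p.app U y = p.app U y') : t.app U y = t.app U y' := by
  have := ConcreteCategory.congr_hom ((pullbackObjIso p p U).inv ≫= congr_app ht U)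
    ((Types.pullbackIsoPullback _ _).inv ⟨(y, y'), h⟩)
  simpa using this

lemma hom_ext_of_isLocallySurjective (hF : Presieve.IsSeparated J F) (p : Y ⟶ X)
    [IsLocallySurjective J p] {s s' : X ⟶ F} (h : p ≫ s = p ≫ s') : s = s' := by
  refine NatTrans.ext <| funext fun U => ConcreteCategory.hom_ext _ _ fun x =>
    (hF _ (imageSieve_mem J p x)).ext fun V f hf => ?_
  rw [← NatTrans.naturality_apply, ← NatTrans.naturality_apply, ← app_localPreimage p x f hf,
    ← NatTrans.comp_app_apply, ← NatTrans.comp_app_apply, h]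

section Desc

variable (p : Y ⟶ X) (t : Y ⟶ F)
  (ht : ∀ {U : Dᵒᵖ} {y y' : Y.obj U}, p.app U y = p.app U y' → t.app U y = t.app U y')

noncomputable def imageSieveFamily {U : D} (x : X.obj (op U)) :
    Presieve.FamilyOfElements F (imageSieve p x).arrows :=
  fun _ f hf => t.app _ (localPreimage p x f hf)

include ht in
lemma imageSieveFamily_compatible {U : D} (x : X.obj (op U)) :
    (imageSieveFamily p t x).Compatible := by
  intro W₁ W₂ V g₁ g₂ f₁ f₂ hf₁ hf₂ hg
  simp only [imageSieveFamily, ← NatTrans.naturality_apply]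
  apply ht
  simp only [NatTrans.naturality_apply, app_localPreimage, ← Functor.map_comp_apply, ← op_comp,
    hg]

variable {p t} (hF : Presieve.IsSheaf J F) [IsLocallySurjective J p]

noncomputable def localDesc {U : D} (x : X.obj (op U)) : F.obj (op U) :=
  (hF _ (imageSieve_mem J p x)).amalgamate _ (imageSieveFamily_compatible p t ht x)

lemma map_localDesc {U V : D} (x : X.obj (op U)) (f : V ⟶ U) {y : Y.obj (op V)}
    (hy : p.app _ y = X.map f.op x) : F.map f.op (localDesc ht hF x) = t.app _ y := by
  refine (hF _ (J.pullback_stable f (imageSieve_mem J p x))).isSeparatedFor.ext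
    fun W g (hg : imageSieve p x (g ≫ f)) => ?_
  rw [← Functor.map_comp_apply, ← op_comp, localDesc,
    Presieve.IsSheafFor.valid_glue _ _ (g ≫ f) hg, ← NatTrans.naturality_apply]
  apply ht
  rw [app_localPreimage, NatTrans.naturality_apply, hy, ← Functor.map_comp_apply, ← op_comp]

lemma localDesc_map {U V : D} (x : X.obj (op U)) (f : V ⟶ U) :
    localDesc ht hF (X.map f.op x) = F.map f.op (localDesc ht hF x) := by
  refine (hF _ (imageSieve_mem J p (X.map f.op x))).isSeparatedFor.ext fun W g hg => ?_
  have hy := app_localPreimage p (X.map f.op x) g hg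
  rw [map_localDesc ht hF _ g hy, ← Functor.map_comp_apply, ← op_comp,
    map_localDesc ht hF x (g ≫ f) (by rw [hy, op_comp, Functor.map_comp_apply])]

lemma localDesc_app {U : D} (y : Y.obj (op U)) : localDesc ht hF (p.app _ y) = t.app _ y := by
  simpa using map_localDesc ht hF (p.app _ y) (𝟙 U) (y := y) (by simp)

noncomputable def descOfIsLocallySurjective : X ⟶ F where
  app U := TypeCat.ofHom fun x => localDesc ht hF (U := U.unop) x
  naturality _ _ f := by
    ext x
    exact localDesc_map ht hF x f.unop

lemma comp_descOfIsLocallySurjective : p ≫ descOfIsLocallySurjective ht hF = t := by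
  ext U y
  exact localDesc_app ht hF (U := U.unop) y

end Desc

theorem existsUnique_fac_of_isLocallySurjective (hF : Presieve.IsSheaf J F) (p : Y ⟶ X)
    [IsLocallySurjective J p] (t : Y ⟶ F)
    (ht : ∀ {U : Dᵒᵖ} {y y' : Y.obj U}, p.app U y = p.app U y' → t.app U y = t.app U y') :
    ∃! s : X ⟶ F, p ≫ s = t :=
  ⟨descOfIsLocallySurjective ht hF, comp_descOfIsLocallySurjective ht hF, fun _ hs =>
    hom_ext_of_isLocallySurjective hF.isSeparated p
      (hs.trans (comp_descOfIsLocallySurjective ht hF).symm)⟩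

end CategoryTheory.Presheaf

lemma IsLocalEpi.isLocallySurjective {τ : PaperCoverage C} {Y X : Cᵒᵖ ⥤ Type u} {p : Y ⟶ X}
    (hp : IsLocalEpi τ p) : Presheaf.IsLocallySurjective τ.topology p where
  imageSieve_mem {c} x := by
    obtain ⟨fam, hfam, lift⟩ := hp c (yonedaEquiv.symm x)
    refine τ.toCoverage.mem_toGrothendieck_sieves_of_superset ?_ ⟨fam, hfam, rfl⟩
    rintro _ _ ⟨j⟩
    obtain ⟨φ, hφ⟩ := lift j
    exact ⟨yonedaEquiv φ, by
      rw [← yonedaEquiv_comp, hφ, ← yonedaEquiv_naturality, Equiv.apply_symm_apply]⟩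

/-- If `F` is a τ-sheaf on `C`, then the presheaf `Hom_Ĉ(−, F)` on `Ĉ`
satisfies descent along every τ-local epimorphism: for every τ-local epimorphism
`p : Y ⟶ X`, the diagram `Hom(X,F) → Hom(Y,F) ⇉ Hom(Y ×_X Y, F)` is an equalizer of sets
(expressed elementwise by unique gluing). In particular, `Hom_Ĉ(−, F)` is a sheaf for the
Grothendieck topology on `Ĉ` generated by the coverage `τ̂` of τ-local epimorphisms. -/
theorem homPresheaf_isSheaf_hatTopology (τ : PaperCoverage C) (F : Cᵒᵖ ⥤ Type u)
    (hF : Presieve.IsSheaf τ.topology F) :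
    (∀ {Y X : Cᵒᵖ ⥤ Type u} (p : Y ⟶ X), IsLocalEpi τ p →
      ∀ t : Y ⟶ F, pullback.fst p p ≫ t = pullback.snd p p ≫ t →
        ∃! s : X ⟶ F, p ≫ s = t) ∧
    Presieve.IsSheaf (hatTopology τ) (yoneda.obj F) := by
  have descent {Y X : Cᵒᵖ ⥤ Type u} (p : Y ⟶ X) (hp : IsLocalEpi τ p) (t : Y ⟶ F)
      (ht : pullback.fst p p ≫ t = pullback.snd p p ≫ t) : ∃! s : X ⟶ F, p ≫ s = t :=
    have := hp.isLocallySurjective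
    Presheaf.existsUnique_fac_of_isLocallySurjective hF p t
      (Presheaf.app_eq_app_of_pullback_fst_comp_eq ht)
  refine ⟨descent, ?_⟩
  rw [hatTopology, Presieve.isSheaf_coverage]
  rintro X _ ⟨Y, p, hp, rfl⟩
  rw [Presieve.isSheafFor_singleton]
  exact fun t ht => descent p hp t (ht _ _ pullback.condition)
end

section
/- Let C be a small category with a coverage τ, and let G be a presheaf of sets on Ĉ which is a τ̂-sheaf and which is limit-preserving. Then the presheaf c ↦ G(y(c)) on C (the restriction of G along the Yoneda embedding) is a τ-sheaf. -/
universe u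

open CategoryTheory CategoryTheory.Limits Opposite

variable {C : Type u} [SmallCategory C]

section Aux

variable {C : Type u} [SmallCategory C]

/-- Joint injectivity of restriction along maps from representables, for a
limit-preserving presheaf on `Ĉ`. -/
lemma jointly_injective_of_limitPreserving (G : (Cᵒᵖ ⥤ Type u)ᵒᵖ ⥤ Type u)
    (hlim : LimitPreserving G) (Z : Cᵒᵖ ⥤ Type u) (a b : G.obj (op Z))
    (h : ∀ (d : C) (ψ : yoneda.obj d ⟶ Z), G.map ψ.op a = G.map ψ.op b) : a = b := by
  classical
  let D := Presheaf.functorToRepresentables Z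
  obtain ⟨hl⟩ := hlim _ _ D
  let σ : colimit D ≅ Z := colimit.isoColimitCocone ⟨_, Presheaf.colimitOfRepresentable Z⟩
  let e := Types.isLimitEquivSections hl
  have key : e (G.map σ.hom.op a) = e (G.map σ.hom.op b) := by
    apply Subtype.ext
    funext j
    have h1 : ∀ (z : G.obj (op Z)),
        (e (G.map σ.hom.op z)).1 j = G.map ((colimit.ι D j.unop ≫ σ.hom).op) z := by
      intro z
      have : (e (G.map σ.hom.op z)).1 j
          = (G.mapCone (colimit.cocone D).op).π.app j (G.map σ.hom.op z) := rfl
      rw [this]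
      show G.map (colimit.ι D j.unop).op (G.map σ.hom.op z) = _
      rw [← FunctorToTypes.map_comp_apply, ← op_comp]
    rw [h1, h1]
    have : colimit.ι D j.unop ≫ σ.hom = (Presheaf.coconeOfRepresentable Z).ι.app j.unop := by
      exact (colimit.isColimit D).comp_coconePointUniqueUpToIso_hom
        (Presheaf.colimitOfRepresentable Z) j.unop
    rw [this]
    have hE : ∀ {P : Cᵒᵖ ⥤ Type u} (d : C) (E : P ≅ yoneda.obj d) (ι : P ⟶ Z),
        G.map ι.op a = G.map ι.op b := by
      intro P d E ι
      have hι : ι = E.hom ≫ (E.inv ≫ ι) := by simp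
      rw [hι, op_comp, FunctorToTypes.map_comp_apply, FunctorToTypes.map_comp_apply, h]
    exact hE _ (uliftYonedaIsoYoneda.app _) _
  have := e.injective key
  have hinj : Function.Injective (G.map σ.hom.op) := by
    intro u v huv
    have : ∀ w, G.map σ.inv.op (G.map σ.hom.op w) = w := by
      intro w
      rw [← FunctorToTypes.map_comp_apply, ← op_comp, Iso.inv_hom_id, op_id,
        FunctorToTypes.map_id_apply]
    rw [← this u, ← this v, huv]
  exact hinj this

end Aux

/-- If `G` is a presheaf of sets on `Ĉ` which is a τ̂-sheaf and is
limit-preserving, then its restriction `c ↦ G(y(c))` along the Yoneda embedding is a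
τ-sheaf on `C`. -/

theorem restriction_isSheaf_of_hatSheaf (τ : PaperCoverage C)
    (G : (Cᵒᵖ ⥤ Type u)ᵒᵖ ⥤ Type u)
    (hG : Presieve.IsSheaf (hatTopology τ) G)
    (hlim : LimitPreserving G) :
    Presieve.IsSheaf τ.topology (yoneda.op ⋙ G) := by
  classical
  rw [PaperCoverage.topology, Presieve.isSheaf_coverage]
  rintro c S ⟨fam, hfam, rfl⟩
  rw [Presieve.isSheafFor_arrows_iff]
  intro x hx
  -- The coproduct of representables and the comparison map π
  let Yo : fam.ι → (Cᵒᵖ ⥤ Type u) := fun i => yoneda.obj (fam.obj i)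
  let D := Discrete.functor Yo
  let F : Cᵒᵖ ⥤ Type u := ∐ Yo
  let π : F ⟶ yoneda.obj c := Sigma.desc (fun i => yoneda.map (fam.map i))
  have hιπ : ∀ i, Sigma.ι Yo i ≫ π = yoneda.map (fam.map i) := fun i => Sigma.ι_desc _ _
  -- π is a τ-local epimorphism
  have hπ : IsLocalEpi τ π := by
    intro c' φ
    obtain ⟨fam', hfam', H⟩ := τ.pullback_compat (Yoneda.fullyFaithful.preimage φ) fam hfam
    refine ⟨fam', hfam', fun j => ?_⟩
    obtain ⟨i, h, hh⟩ := H j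
    refine ⟨yoneda.map h ≫ Sigma.ι Yo i, ?_⟩
    rw [Category.assoc, hιπ i, ← Functor.map_comp, hh, Functor.map_comp,
      Yoneda.fullyFaithful.map_preimage]
  -- sheaf condition of G for the singleton presieve {π}
  have hsing : Presieve.IsSheafFor G (Presieve.singleton π) :=
    (Presieve.isSheaf_coverage (hatCoverage τ) G).mp hG _ ⟨F, π, hπ, rfl⟩
  rw [← Presieve.ofArrows_pUnit, Presieve.isSheafFor_arrows_iff] at hsing
  -- the element of G(F) corresponding to the family x, via limit preservation
  obtain ⟨hl⟩ := hlim _ _ D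
  let e := Types.isLimitEquivSections hl
  have happ : ∀ (j : (Discrete fam.ι)ᵒᵖ) (z : G.obj (op F)),
      (e z).1 j = G.map (colimit.ι D j.unop).op z := fun j z => rfl
  let s : (D.op ⋙ G).sections := by
    refine ⟨fun j => x j.unop.as, ?_⟩
    rintro ⟨⟨i⟩⟩ ⟨⟨i'⟩⟩ f
    obtain rfl : i' = i := Discrete.eq_of_hom f.unop
    obtain rfl : f = 𝟙 _ := Quiver.Hom.unop_inj (Subsingleton.elim _ _)
    simp
  let yel : G.obj (op F) := e.symm s
  have hyel : ∀ i, G.map (Sigma.ι Yo i).op yel = x i := fun i =>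
    Types.isLimitEquivSections_symm_apply hl s (op (Discrete.mk i))
  -- joint injectivity of the components G(F) → G(y cᵢ)
  have hFinj : ∀ (a b : G.obj (op F)),
      (∀ i, G.map (Sigma.ι Yo i).op a = G.map (Sigma.ι Yo i).op b) → a = b := by
    intro a b hab
    apply e.injective
    apply Subtype.ext
    funext j
    obtain ⟨⟨i⟩⟩ := j
    rw [happ, happ]
    exact hab i
  -- factorization of maps from representables into the coproduct
  have hfact : ∀ (d : C) (χ : yoneda.obj d ⟶ F),
      ∃ (i : fam.ι) (h : d ⟶ fam.obj i), χ = yoneda.map h ≫ Sigma.ι Yo i := by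
    intro d χ
    have hcol := isColimitOfPreserves ((evaluation Cᵒᵖ (Type u)).obj (op d))
      (colimit.isColimit D)
    obtain ⟨⟨i⟩, h, hh⟩ := Types.jointly_surjective _ hcol (yonedaEquiv χ)
    refine ⟨i, h, yonedaEquiv.injective ?_⟩
    rw [yonedaEquiv_comp, yonedaEquiv_yoneda_map]
    exact hh.symm
  -- compatibility of yel for the singleton presieve
  have hcompat : Presieve.Arrows.Compatible G (fun _ : PUnit.{u+1} => π) (fun _ => yel) := by
    intro _ _ Z g₁ g₂ hg
    apply jointly_injective_of_limitPreserving G hlim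
    intro d ψ
    obtain ⟨i₁, h₁, hh₁⟩ := hfact d (ψ ≫ g₁)
    obtain ⟨i₂, h₂, hh₂⟩ := hfact d (ψ ≫ g₂)
    have hcomm : h₁ ≫ fam.map i₁ = h₂ ≫ fam.map i₂ := by
      apply yoneda.map_injective
      rw [Functor.map_comp, Functor.map_comp, ← hιπ i₁, ← hιπ i₂,
        ← Category.assoc, ← Category.assoc, ← hh₁, ← hh₂,
        Category.assoc, Category.assoc, hg]
    have key := hx i₁ i₂ d h₁ h₂ hcomm
    simp only [Functor.comp_map, Functor.op_map] at key
    calc G.map ψ.op (G.map g₁.op yel)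
        = G.map (ψ ≫ g₁).op yel := by
          rw [← FunctorToTypes.map_comp_apply, ← op_comp]
      _ = G.map (yoneda.map h₁).op (G.map (Sigma.ι Yo i₁).op yel) := by
          rw [hh₁, op_comp, FunctorToTypes.map_comp_apply]
      _ = G.map (yoneda.map h₂).op (G.map (Sigma.ι Yo i₂).op yel) := by
          rw [hyel, hyel]; exact key
      _ = G.map (ψ ≫ g₂).op yel := by
          rw [hh₂, op_comp, FunctorToTypes.map_comp_apply]
      _ = G.map ψ.op (G.map g₂.op yel) := by
          rw [← FunctorToTypes.map_comp_apply, ← op_comp]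
  obtain ⟨t, ht, huniq⟩ := hsing (fun _ => yel) hcompat
  have htπ : G.map π.op t = yel := ht PUnit.unit
  refine ⟨t, fun i => ?_, fun t' ht' => ?_⟩
  · show G.map (yoneda.map (fam.map i)).op t = x i
    rw [← hιπ i, op_comp, FunctorToTypes.map_comp_apply, htπ, hyel]
  · refine huniq t' (fun _ => ?_)
    apply hFinj
    intro i
    rw [← FunctorToTypes.map_comp_apply, ← op_comp, hιπ i, hyel]
    exact ht' i
end

section
/- Let C be a small category with a coverage τ, let J denote the Grothendieck topology on C generated by τ, and let L : Ĉ → Sh(C,J) denote the sheafification functor (left adjoint to the inclusion of set-valued J-sheaves into Ĉ). Let G be a limit-preserving presheaf of sets on Ĉ. Then G is a τ̂-sheaf if and only if G sends every morphism f of Ĉ for which L(f) is an isomorphism to a bijection. -/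
universe u

open CategoryTheory CategoryTheory.Limits Opposite

variable {C : Type u} [SmallCategory C]

universe w

section Auxiliary

/-- Sheaf condition for a singleton presieve, in elementary terms. -/
theorem isSheafFor_singleton {D : Type*} [Category D] {P : Dᵒᵖ ⥤ Type*} {Y X : D} (π : Y ⟶ X) :
    Presieve.IsSheafFor P (Presieve.singleton π) ↔
      ∀ y : P.obj (op Y),
        (∀ ⦃W : D⦄ (g₁ g₂ : W ⟶ Y), g₁ ≫ π = g₂ ≫ π →
          P.map g₁.op y = P.map g₂.op y) →
        ∃! t : P.obj (op X), P.map π.op t = y := by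
  constructor
  · intro H y hy
    let x : Presieve.FamilyOfElements P (Presieve.singleton π) := fun W f hf => by
      cases hf; exact y
    have hx : x.Compatible := by
      rintro W₁ W₂ V g₁ g₂ f₁ f₂ h₁ h₂ comm
      cases h₁; cases h₂
      exact hy g₁ g₂ comm
    obtain ⟨t, ht, hu⟩ := H x hx
    refine ⟨t, ht π Presieve.singleton.mk, fun t' ht' => hu t' ?_⟩
    rintro W f hf
    cases hf; exact ht'
  · intro H x hx
    obtain ⟨t, ht, hu⟩ := H (x π Presieve.singleton.mk)
      (fun W g₁ g₂ hg => hx g₁ g₂ Presieve.singleton.mk Presieve.singleton.mk hg)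
    refine ⟨t, ?_, fun t' ht' => hu t' (ht' π Presieve.singleton.mk)⟩
    rintro W f hf
    cases hf; exact ht

/-- Transport bijectivity of the action on maps along an isomorphism of functors. -/
theorem bij_of_iso {D : Type*} [Category D] {P Q : D ⥤ Type w} (e : P ≅ Q) {A B : D} (f : A ⟶ B)
    (h : Function.Bijective (P.map f)) : Function.Bijective (Q.map f) := by
  have h' : IsIso (P.map f) := (isIso_iff_bijective _).2 h
  have : Q.map f = e.inv.app A ≫ P.map f ≫ e.hom.app B := by
    rw [← Category.assoc, ← NatTrans.naturality, Category.assoc, Iso.inv_hom_id_app,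
      Category.comp_id]
  rw [this]
  exact (isIso_iff_bijective _).1 inferInstance

variable {C : Type u} [SmallCategory C]

/-- The restriction of `G` to representables, i.e. the presheaf `c ↦ G(y(c))`. -/
def theZ (G : (Cᵒᵖ ⥤ Type u)ᵒᵖ ⥤ Type u) : Cᵒᵖ ⥤ Type u := yoneda.op ⋙ G

/-- The canonical comparison map `G ⟶ Hom(-, Z)` where `Z = G ∘ yᵒᵖ`. -/
def toYon (G : (Cᵒᵖ ⥤ Type u)ᵒᵖ ⥤ Type u) : G ⟶ yoneda.obj (theZ G) where
  app X := TypeCat.ofHom fun s =>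
    { app := fun c => TypeCat.ofHom fun ξ => G.map (Quiver.Hom.op (yonedaEquiv.symm ξ : yoneda.obj c.unop ⟶ X.unop)) s
      naturality := by
        intro c c' u
        ext ξ
        show G.map (yonedaEquiv.symm ((unop X).map u ξ)).op s =
          G.map (yoneda.map u.unop).op (G.map (yonedaEquiv.symm ξ).op s)
        rw [← FunctorToTypes.map_comp_apply, ← op_comp, yonedaEquiv_symm_naturality_left,
          Quiver.Hom.op_unop] }
  naturality := by
    intro X X' t
    ext s
    refine NatTrans.ext (funext fun c => ?_)
    ext ξ
    show G.map (yonedaEquiv.symm ξ).op (G.map t s) =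
      G.map (yonedaEquiv.symm (t.unop.app c ξ)).op s
    rw [← FunctorToTypes.map_comp_apply, ← Quiver.Hom.op_unop t, ← op_comp,
      yonedaEquiv_symm_naturality_right]
    rfl

theorem yonedaEquiv_toYon_app (G : (Cᵒᵖ ⥤ Type u)ᵒᵖ ⥤ Type u) (c : C)
    (s : G.obj (op (yoneda.obj c))) :
    yonedaEquiv ((toYon G).app (op (yoneda.obj c)) s) = s := by
  show G.map (yonedaEquiv.symm (𝟙 c)).op s = s
  have : (yonedaEquiv.symm (𝟙 c) : yoneda.obj c ⟶ yoneda.obj c) = 𝟙 (yoneda.obj c) := by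
    apply yonedaEquiv.injective
    rw [Equiv.apply_symm_apply]
    rfl
  rw [this, op_id, FunctorToTypes.map_id_apply]

end Auxiliary

section Representability

variable {C : Type u} [SmallCategory C]

theorem isIso_toYon (G : (Cᵒᵖ ⥤ Type u)ᵒᵖ ⥤ Type u) (hG : LimitPreserving G) :
    IsIso (toYon G) := by
  have bij_rep : ∀ c : C, IsIso ((toYon G).app (op (yoneda.obj c))) := by
    intro c
    rw [isIso_iff_bijective]
    constructor
    · intro s₁ s₂ h
      have := congrArg yonedaEquiv h
      rwa [yonedaEquiv_toYon_app, yonedaEquiv_toYon_app] at this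
    · intro ν
      exact ⟨@yonedaEquiv C _ c (theZ G) ν, (@yonedaEquiv C _ c (theZ G)).injective
        (yonedaEquiv_toYon_app G c (@yonedaEquiv C _ c (theZ G) ν))⟩
  suffices h : ∀ X : (Cᵒᵖ ⥤ Type u)ᵒᵖ, IsIso ((toYon G).app X) from
    NatIso.isIso_of_isIso_app _
  rintro ⟨X⟩
  -- exhibit `X` as a colimit of representables
  let D := Presheaf.functorToRepresentables X
  obtain ⟨t₀⟩ := hG _ inferInstance D
  -- transfer the limit cone along the isomorphism of colimit cocones
  have w₁ : ∀ (j : X.Elementsᵒᵖᵒᵖ),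
      (G.mapCone (colimit.cocone D).op).π.app j =
        (G.mapIso (((colimit.isColimit D).coconePointUniqueUpToIso
            (Presheaf.colimitOfRepresentable X)).symm.op)).hom ≫
          (G.mapCone (Presheaf.coconeOfRepresentable X).op).π.app j := by
    intro j
    have h2 := (IsColimit.comp_coconePointUniqueUpToIso_inv (colimit.isColimit D)
      (Presheaf.colimitOfRepresentable X) (unop j)).symm
    simp only [colimit.cocone_ι] at h2
    dsimp
    rw [← G.map_comp, Iso.op_inv, ← op_comp, h2]
  have t₂ : IsLimit (G.mapCone (Presheaf.coconeOfRepresentable X).op) :=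
    t₀.ofIsoLimit (Cones.ext
      (G.mapIso (((colimit.isColimit D).coconePointUniqueUpToIso
        (Presheaf.colimitOfRepresentable X)).symm.op)) w₁)
  have t₂' : IsLimit ((yoneda.obj (theZ G)).mapCone (Presheaf.coconeOfRepresentable X).op) :=
    isLimitOfPreserves _ ((Presheaf.colimitOfRepresentable X).op)
  let β : (D.op ⋙ G) ⟶ (D.op ⋙ yoneda.obj (theZ G)) := Functor.whiskerLeft D.op (toYon G)
  have hβ : ∀ j, IsIso (β.app j) := fun j => by
    let c := (unop (unop j)).1.unop
    let e : D.obj (unop j) ≅ yoneda.obj c := uliftYonedaIsoYoneda.app c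
    have := bij_rep c
    change IsIso ((toYon G).app (op (D.obj (unop j))))
    have hq : (toYon G).app (op (D.obj (unop j))) =
        G.map e.inv.op ≫ (toYon G).app _ ≫ (yoneda.obj (theZ G)).map e.hom.op := by
      rw [← (toYon G).naturality, ← Category.assoc, ← G.map_comp, ← op_comp, e.hom_inv_id,
        op_id, G.map_id, Category.id_comp]
    rw [hq]
    infer_instance
  have : IsIso β := NatIso.isIso_of_isIso_app β
  have t₂'' : IsLimit ((Cones.postcompose β).obj
      (G.mapCone (Presheaf.coconeOfRepresentable X).op)) :=
    ((IsLimit.postcomposeHomEquiv (asIso β) _).symm t₂ : _)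
  have huniq : (toYon G).app (op X) =
      (IsLimit.conePointUniqueUpToIso t₂'' t₂').hom := by
    refine t₂'.uniq ((Cones.postcompose β).obj
      (G.mapCone (Presheaf.coconeOfRepresentable X).op)) _ (fun j => ?_)
    exact ((toYon G).naturality _).symm
  rw [huniq]
  exact Iso.isIso_hom _

end Representability

section SheafLemmas

variable {C : Type u} [SmallCategory C]

/-- Key lemma: if `Z` satisfies the sheaf condition for all covering families of `τ` and
`π` is a `τ`-local epimorphism, then morphisms into `Z` descend uniquely along `π`. -/
theorem existsUnique_hom_of_localEpi (τ : PaperCoverage C) {Z : Cᵒᵖ ⥤ Type u}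
    (hZ : ∀ {c : C} (fam : CoverFamily C c), fam ∈ τ.covers c →
      Presieve.IsSheafFor Z (Presieve.ofArrows fam.obj fam.map))
    {Y X : Cᵒᵖ ⥤ Type u} (π : Y ⟶ X) (hπ : IsLocalEpi τ π) (x : Y ⟶ Z)
    (hx : ∀ ⦃W : Cᵒᵖ ⥤ Type u⦄ (g₁ g₂ : W ⟶ Y), g₁ ≫ π = g₂ ≫ π → g₁ ≫ x = g₂ ≫ x) :
    ∃! h : X ⟶ Z, π ≫ h = x := by
  classical
  -- the defining property of the value of the descent at a point `a` over `c`
  let Pp : ∀ (c : C), X.obj (op c) → Z.obj (op c) → Prop := fun c a z =>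
    ∀ (d : C) (g : d ⟶ c) (ψ : yoneda.obj d ⟶ Y),
      ψ ≫ π = yoneda.map g ≫ yonedaEquiv.symm a → yonedaEquiv (ψ ≫ x) = Z.map g.op z
  have key : ∀ (c : C) (a : X.obj (op c)), ∃! z : Z.obj (op c), Pp c a z := by
    intro c a
    obtain ⟨fam, hfam, hlift⟩ := hπ c (yonedaEquiv.symm a)
    choose φl hφl using hlift
    have hSh : Presieve.IsSheafFor Z
        ((Sieve.generate (Presieve.ofArrows fam.obj fam.map)) : Presieve c) :=
      (Presieve.isSheafFor_iff_generate _).1 (hZ fam hfam)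
    have hmem : ∀ ⦃d : C⦄ ⦃g : d ⟶ c⦄,
        (Sieve.generate (Presieve.ofArrows fam.obj fam.map)).arrows g →
        ∃ ψ : yoneda.obj d ⟶ Y, ψ ≫ π = yoneda.map g ≫ yonedaEquiv.symm a := by
      rintro d g ⟨e, h, f, hf, rfl⟩
      cases hf with
      | mk i =>
        exact ⟨yoneda.map h ≫ φl i, by
          rw [Category.assoc, hφl i, ← Category.assoc, ← yoneda.map_comp]⟩
    let t : Presieve.FamilyOfElements Z
        ((Sieve.generate (Presieve.ofArrows fam.obj fam.map)) : Presieve c) :=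
      fun d g hg => yonedaEquiv ((hmem hg).choose ≫ x)
    have t_eq : ∀ ⦃d : C⦄ ⦃g : d ⟶ c⦄ (hg) (ψ : yoneda.obj d ⟶ Y)
        (_ : ψ ≫ π = yoneda.map g ≫ yonedaEquiv.symm a), t g hg = yonedaEquiv (ψ ≫ x) :=
      fun d g hg ψ hψ =>
        congrArg yonedaEquiv (hx _ _ ((hmem hg).choose_spec.trans hψ.symm))
    have t_comp : t.Compatible := by
      intro d₁ d₂ e g₁ g₂ f₁ f₂ h₁ h₂ hcomm
      rw [t_eq h₁ _ (hmem h₁).choose_spec, t_eq h₂ _ (hmem h₂).choose_spec,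
        yonedaEquiv_naturality, yonedaEquiv_naturality]
      refine congrArg yonedaEquiv ?_
      rw [← Category.assoc, ← Category.assoc]
      refine hx _ _ ?_
      rw [Category.assoc, Category.assoc, (hmem h₁).choose_spec, (hmem h₂).choose_spec,
        ← Category.assoc, ← Category.assoc, ← yoneda.map_comp, ← yoneda.map_comp, hcomm]
    have hPamalg : Pp c a (hSh.amalgamate t t_comp) := by
      intro d g ψ hψ
      obtain ⟨fam', hfam', H⟩ := τ.pullback_compat g fam hfam
      refine ((hZ fam' hfam').isSeparatedFor).ext ?_
      rintro e f hf
      cases hf with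
      | mk k =>
        obtain ⟨i, h, hcomm⟩ := H k
        have hmem_i : (Sieve.generate (Presieve.ofArrows fam.obj fam.map)).arrows
            (fam.map i) := ⟨_, 𝟙 _, fam.map i, Presieve.ofArrows.mk i, Category.id_comp _⟩
        calc Z.map (fam'.map k).op (yonedaEquiv (ψ ≫ x))
            = yonedaEquiv (yoneda.map (fam'.map k) ≫ ψ ≫ x) := by
              rw [yonedaEquiv_naturality]
          _ = yonedaEquiv (yoneda.map h ≫ φl i ≫ x) := by
              refine congrArg yonedaEquiv ?_
              rw [← Category.assoc, ← Category.assoc]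
              refine hx _ _ ?_
              rw [Category.assoc, Category.assoc, hψ, hφl i, ← Category.assoc,
                ← Category.assoc, ← yoneda.map_comp, ← yoneda.map_comp, hcomm]
          _ = Z.map h.op (t (fam.map i) hmem_i) := by
              rw [t_eq hmem_i _ (hφl i), yonedaEquiv_naturality]
          _ = Z.map h.op (Z.map (fam.map i).op (hSh.amalgamate t t_comp)) := by
              rw [Presieve.IsSheafFor.valid_glue hSh t_comp _ hmem_i]
          _ = Z.map (fam'.map k).op (Z.map g.op (hSh.amalgamate t t_comp)) := by
              rw [← FunctorToTypes.map_comp_apply, ← FunctorToTypes.map_comp_apply,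
                ← op_comp, ← op_comp, hcomm]
    refine ⟨hSh.amalgamate t t_comp, hPamalg, ?_⟩
    intro z' hz'
    refine ((hZ fam hfam).isSeparatedFor).ext ?_
    rintro e f hf
    cases hf with
    | mk j =>
      rw [← hz' (fam.obj j) (fam.map j) (φl j) (hφl j),
        ← hPamalg (fam.obj j) (fam.map j) (φl j) (hφl j)]
  choose sel hsel huniq using key
  have hnat : ∀ (c d : C) (u : d ⟶ c) (a : X.obj (op c)),
      Z.map u.op (sel c a) = sel d (X.map u.op a) := by
    intro c d u a
    refine huniq d (X.map u.op a) _ ?_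
    intro e g ψ hψ
    have hψ' : ψ ≫ π = yoneda.map (g ≫ u) ≫ yonedaEquiv.symm a := by
      rw [hψ, ← yonedaEquiv_symm_naturality_left, ← Category.assoc, ← yoneda.map_comp]
    rw [hsel c a e (g ≫ u) ψ hψ', op_comp, FunctorToTypes.map_comp_apply]
  refine ⟨{ app := fun c => TypeCat.ofHom fun a => sel c.unop a, naturality := ?_ }, ?_, ?_⟩
  · intro c c' v
    ext a
    exact (hnat c.unop c'.unop v.unop a).symm
  · refine NatTrans.ext (funext fun c => ?_)
    ext b
    have h1 : yonedaEquiv.symm b ≫ π =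
        yoneda.map (𝟙 c.unop) ≫ yonedaEquiv.symm (π.app c b) := by
      rw [yoneda.map_id, Category.id_comp, yonedaEquiv_symm_naturality_right]
    have h2 := hsel c.unop (π.app c b) c.unop (𝟙 _) (yonedaEquiv.symm b) h1
    rw [yonedaEquiv_comp, Equiv.apply_symm_apply, op_id, FunctorToTypes.map_id_apply] at h2
    exact h2.symm
  · intro h' hh'
    refine NatTrans.ext (funext fun c => ?_)
    ext a
    refine huniq c.unop a _ ?_
    intro d g ψ hψ
    have : yonedaEquiv (ψ ≫ x) = yonedaEquiv (yoneda.map g ≫ (yonedaEquiv.symm a ≫ h')) := by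
      rw [← hh', ← Category.assoc, hψ, Category.assoc]
    rw [this, ← yonedaEquiv_naturality, yonedaEquiv_comp, Equiv.apply_symm_apply]
    rfl
end SheafLemmas

section SheafLemmas2

variable {C : Type u} [SmallCategory C]

/-- The inclusion of the sieve generated by a covering family is a `τ`-local epimorphism. -/
theorem isLocalEpi_functorInclusion (τ : PaperCoverage C) {c : C} (fam : CoverFamily C c)
    (hfam : fam ∈ τ.covers c) :
    IsLocalEpi τ (Sieve.generate (Presieve.ofArrows fam.obj fam.map)).functorInclusion := by
  intro c' φ
  obtain ⟨fam', hfam', H⟩ := τ.pullback_compat (yoneda.preimage φ) fam hfam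
  refine ⟨fam', hfam', fun k => ?_⟩
  obtain ⟨i, h', hcomm⟩ := H k
  have hmemk : (Sieve.generate (Presieve.ofArrows fam.obj fam.map)).arrows
      (fam'.map k ≫ yoneda.preimage φ) :=
    ⟨fam.obj i, h', fam.map i, Presieve.ofArrows.mk i, hcomm⟩
  refine ⟨yonedaEquiv.symm (⟨fam'.map k ≫ yoneda.preimage φ, hmemk⟩ :
    (Sieve.generate (Presieve.ofArrows fam.obj fam.map)).functor.obj (op (fam'.obj k))), ?_⟩
  apply yonedaEquiv.injective
  rw [yonedaEquiv_comp]; erw [Equiv.apply_symm_apply]; rw [← yonedaEquiv_naturality]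
  show fam'.map k ≫ yoneda.preimage φ = (yoneda.obj c).map (fam'.map k).op (yonedaEquiv φ)
  have : yonedaEquiv φ = yoneda.preimage φ := by
    conv_lhs => rw [← yoneda.map_preimage φ]
    exact yonedaEquiv_yoneda_map _
  rw [this]
  rfl

/-- If `Hom(-, Z)` is a sheaf for the `τ̂`-topology, then `Z` is a sheaf for the topology
generated by `τ`. -/
theorem sheaf_of_hatSheaf (τ : PaperCoverage C) {Z : Cᵒᵖ ⥤ Type u}
    (h : Presieve.IsSheaf (hatTopology τ) (yoneda.obj Z)) :
    Presieve.IsSheaf τ.topology Z := by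
  apply (Presieve.isSheaf_coverage τ.toCoverage Z).2
  rintro c R ⟨fam, hfam, rfl⟩
  rw [Presieve.isSheafFor_iff_generate, Presieve.isSheafFor_iff_yonedaSheafCondition]
  set S := Sieve.generate (Presieve.ofArrows fam.obj fam.map) with hS
  have hle : IsLocalEpi τ S.functorInclusion := isLocalEpi_functorInclusion τ fam hfam
  have hsingle : Presieve.IsSheafFor (yoneda.obj Z) (Presieve.singleton S.functorInclusion) :=
    (Presieve.isSheaf_coverage (hatCoverage τ) (yoneda.obj Z)).1 h _
      ⟨S.functor, S.functorInclusion, hle, rfl⟩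
  rw [isSheafFor_singleton] at hsingle
  intro u
  obtain ⟨t, ht, hu⟩ := hsingle u (fun W g₁ g₂ hg => by
    rw [(cancel_mono S.functorInclusion).1 hg])
  exact ⟨t, ht, fun t' ht' => hu t' ht'⟩

/-- If `Hom(-, Z)` inverts all maps inverted by sheafification, then `Z` is a sheaf. -/
theorem sheaf_of_inverts (τ : PaperCoverage C) {Z : Cᵒᵖ ⥤ Type u}
    (hinv : ∀ {A B : Cᵒᵖ ⥤ Type u} (f : A ⟶ B),
      IsIso ((presheafToSheaf τ.topology (Type u)).map f) →
        Function.Bijective ((yoneda.obj Z).map f.op)) :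
    Presieve.IsSheaf τ.topology Z := by
  intro c S hS
  rw [Presieve.isSheafFor_iff_yonedaSheafCondition]
  have h1 : Presheaf.IsLocallyInjective τ.topology S.functorInclusion :=
    Presheaf.isLocallyInjective_of_injective _ _ (fun d => Subtype.val_injective)
  have h2 : Presheaf.IsLocallySurjective τ.topology S.functorInclusion := by
    constructor
    intro d s
    refine τ.topology.superset_covering ?_ (τ.topology.pullback_stable s hS)
    intro e g hg
    exact ⟨⟨g ≫ s, hg⟩, rfl⟩
  have hW : τ.topology.W S.functorInclusion := by
    letI := h1; letI := h2
    exact GrothendieckTopology.W_of_isLocallyBijective _ _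
  have hiso := (τ.topology.W_iff S.functorInclusion).1 hW
  have hbij := hinv S.functorInclusion hiso
  intro u
  obtain ⟨g, hg⟩ := hbij.2 u
  exact ⟨g, hg, fun g' hg' => hbij.1 (hg'.trans hg.symm)⟩

end SheafLemmas2
/-- Let `L` be the sheafification functor for the topology on `C`
generated by `τ`. A limit-preserving presheaf of sets `G` on `Ĉ` is a τ̂-sheaf if and
only if `G` sends every morphism `f` of `Ĉ` for which `L(f)` is an isomorphism to a
bijection. -/
theorem isSheaf_hatTopology_iff_inverts_local_isos (τ : PaperCoverage C)
    (G : (Cᵒᵖ ⥤ Type u)ᵒᵖ ⥤ Type u) (hG : LimitPreserving G) :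
    Presieve.IsSheaf (hatTopology τ) G ↔
      ∀ {A B : Cᵒᵖ ⥤ Type u} (f : A ⟶ B),
        IsIso ((presheafToSheaf τ.topology (Type u)).map f) →
          Function.Bijective (G.map f.op) := by
  haveI : IsIso (toYon G) := isIso_toYon G hG
  let e : G ≅ yoneda.obj (theZ G) := asIso (toYon G)
  constructor
  · intro hsheaf A B f hf
    have hG' : Presieve.IsSheaf (hatTopology τ) (yoneda.obj (theZ G)) :=
      fun X S hS => Presieve.isSheafFor_iso e (hsheaf S hS)
    have hZ : Presieve.IsSheaf τ.topology (theZ G) := sheaf_of_hatSheaf τ hG'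
    have hW : τ.topology.W f := (τ.topology.W_iff f).2 hf
    have hb : Function.Bijective ((yoneda.obj (theZ G)).map f.op) :=
      hW (theZ G) ((isSheaf_iff_isSheaf_of_type τ.topology (theZ G)).2 hZ)
    exact bij_of_iso e.symm f.op hb
  · intro hinv
    have hZ : Presieve.IsSheaf τ.topology (theZ G) :=
      sheaf_of_inverts τ (fun f hf => bij_of_iso e f.op (hinv f hf))
    have hfam : ∀ {c : C} (fam : CoverFamily C c), fam ∈ τ.covers c →
        Presieve.IsSheafFor (theZ G) (Presieve.ofArrows fam.obj fam.map) :=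
      fun fam hf => (Presieve.isSheaf_coverage τ.toCoverage (theZ G)).1 hZ _ ⟨fam, hf, rfl⟩
    apply (Presieve.isSheaf_coverage (hatCoverage τ) G).2
    rintro X R ⟨Y, π, hπ, rfl⟩
    refine Presieve.isSheafFor_iso e.symm ?_
    rw [isSheafFor_singleton]
    intro y hy
    exact existsUnique_hom_of_localEpi τ hfam π hπ y hy
end
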